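/- With G, the max-blowup A = A1 ∪ ... ∪ A6, and the sets Y_i as in the context: if in addition G contains no induced subgraph isomorphic to F1, then for each i (mod 6) there is no edge between Y_i and Y_{i+3}. -/

import Mathlib

open SimpleGraph

/-- `G` contains no induced subgraph isomorphic to `H`. -/
def IndFree {V : Type*} {W : Type*} (G : SimpleGraph V) (H : SimpleGraph W) : Prop :=
  IsEmpty (H ↪g G)

/-- The gem: a `P4` `0-1-2-3` plus a vertex `4` adjacent to all of it. -/
def gemGraph : SimpleGraph (Fin 5) :=
  fromEdgeSet {s(0,1), s(1,2), s(2,3), s(4,0), s(4,1), s(4,2), s(4,3)}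

/-- `F1`: the 6-cycle `v1-...-v6 = 0-...-5` plus vertices `y1 = 6`, `y4 = 7`
and edges `y1v1, y1y4, y4v4`. -/
def graphF1 : SimpleGraph (Fin 8) :=
  fromEdgeSet {s(0,1), s(1,2), s(2,3), s(3,4), s(4,5), s(5,0),
               s(6,0), s(6,7), s(7,3)}

/-- `A 0, ..., A 5` form a blowup of a 6-cycle in `G`: nonempty pairwise
disjoint cliques, consecutive ones complete to each other, non-consecutive
ones anticomplete (indices mod 6). -/
def IsBlowupC6 {V : Type*} (G : SimpleGraph V) (A : Fin 6 → Set V) : Prop :=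
  (∀ i, (A i).Nonempty) ∧
  (∀ i, G.IsClique (A i)) ∧
  (Pairwise fun i j => Disjoint (A i) (A j)) ∧
  (∀ i : Fin 6, ∀ a ∈ A i, ∀ b ∈ A (i + 1), G.Adj a b) ∧
  (∀ i j : Fin 6, j ≠ i → j ≠ i + 1 → j ≠ i - 1 → ∀ a ∈ A i, ∀ b ∈ A j, ¬ G.Adj a b)

/-- A max-blowup of the 6-cycle: no outside vertex can be added to any `A i`. -/
def IsMaxBlowupC6 {V : Type*} (G : SimpleGraph V) (A : Fin 6 → Set V) : Prop :=
  IsBlowupC6 G A ∧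
  ∀ x ∉ ⋃ i, A i, ∀ i, ¬ IsBlowupC6 G (Function.update A i (insert x (A i)))

/-- `Y i`: vertices outside the blowup with a neighbor in `A i`,
anticomplete to the rest of the blowup. -/
def YSet {V : Type*} (G : SimpleGraph V) (A : Fin 6 → Set V) (i : Fin 6) : Set V :=
  {x | x ∉ (⋃ j, A j) ∧ (∃ a ∈ A i, G.Adj x a) ∧
    ∀ j, j ≠ i → ∀ a ∈ A j, ¬ G.Adj x a}

set_option maxHeartbeats 2000000 in
def buildF1 {V : Type*} (G : SimpleGraph V) (b : Fin 6 → V) (x y : V)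
    (hbadj : ∀ j, G.Adj (b j) (b (j+1)))
    (hbnadj : ∀ j k : Fin 6, k ≠ j → k ≠ j+1 → k ≠ j-1 → ¬ G.Adj (b j) (b k))
    (hbinj : ∀ j k : Fin 6, j ≠ k → b j ≠ b k)
    (hxb : ∀ j, x ≠ b j) (hyb : ∀ j, y ≠ b j) (hxy : x ≠ y)
    (hx0 : G.Adj x (b 0)) (hxn : ∀ j, j ≠ 0 → ¬ G.Adj x (b j))
    (hy3 : G.Adj y (b 3)) (hyn : ∀ j, j ≠ 3 → ¬ G.Adj y (b j))
    (hxyadj : G.Adj x y) : graphF1 ↪g G := by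
  set f : Fin 8 → V := ![b 0, b 1, b 2, b 3, b 4, b 5, x, y] with hfdef
  have finj : Function.Injective f := by
    intro u w h
    fin_cases u <;> fin_cases w <;> simp only [hfdef] at h <;> norm_num at h <;>
      first
        | rfl
        | exact absurd h (hbinj _ _ (by decide))
        | exact absurd h.symm (hbinj _ _ (by decide))
        | exact absurd h.symm (hxb _)
        | exact absurd h (hxb _)
        | exact absurd h.symm (hyb _)
        | exact absurd h (hyb _)
        | exact absurd h hxy
        | exact absurd h.symm hxy
  refine ⟨⟨f, finj⟩, ?_⟩
  intro u w
  constructor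
  · intro hG
    by_contra hnF
    fin_cases u <;> fin_cases w <;>
      simp only [hfdef] at hG <;> norm_num at hG <;>
      first
        | exact G.irrefl hG
        | exact (hbnadj _ _ (by decide) (by decide) (by decide)) hG
        | exact (hbnadj _ _ (by decide) (by decide) (by decide)) hG.symm
        | exact (hxn _ (by decide)) hG
        | exact (hxn _ (by decide)) hG.symm
        | exact (hyn _ (by decide)) hG
        | exact (hyn _ (by decide)) hG.symm
        | exact hnF (by simp [graphF1])
  · intro hF
    fin_cases u <;> fin_cases w <;>
      first
        | (exfalso; revert hF; simp [graphF1]; done)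
        | (simp only [hfdef]; norm_num;
           first
            | exact hbadj _
            | exact (show (0:Fin 6)+1 = 1 by decide) ▸ (hbadj 0).symm
            | exact (show (1:Fin 6)+1 = 2 by decide) ▸ (hbadj 1).symm
            | exact (show (2:Fin 6)+1 = 3 by decide) ▸ (hbadj 2).symm
            | exact (show (3:Fin 6)+1 = 4 by decide) ▸ (hbadj 3).symm
            | exact (show (4:Fin 6)+1 = 5 by decide) ▸ (hbadj 4).symm
            | exact hx0
            | exact hx0.symm
            | exact hy3
            | exact hy3.symm
            | exact hxyadj
            | exact hxyadj.symm
            | exact (show G.Adj (b 5) (b 0) from by simpa using hbadj 5)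
            | exact (show G.Adj (b 0) (b 5) from by simpa using (hbadj 5).symm))

theorem stmt_9 {V : Type*} [Fintype V] (G : SimpleGraph V) (hconn : G.Connected)
    (hP7 : IndFree G (pathGraph 7)) (hC7 : IndFree G (cycleGraph 7))
    (hC4 : IndFree G (cycleGraph 4)) (hgem : IndFree G gemGraph)
    (A : Fin 6 → Set V) (hA : IsMaxBlowupC6 G A) (hF1 : IndFree G graphF1) :
    ∀ i : Fin 6, ∀ x ∈ YSet G A i, ∀ y ∈ YSet G A (i + 3), ¬ G.Adj x y := by
  rintro i x ⟨hxA, ⟨ax, haxA, haxadj⟩, hxanti⟩ y ⟨hyA, ⟨ay, hayA, hayadj⟩, hyanti⟩ hadj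
  obtain ⟨⟨hne, hcl, hdisj, hcomp, hanti⟩, -⟩ := hA
  choose c hc using hne
  set b : Fin 6 → V := fun j => if j = 0 then ax else if j = 3 then ay else c (i + j) with hbdef
  have hbmem : ∀ j, b j ∈ A (i + j) := by
    intro j
    by_cases h0 : j = 0
    · subst h0; simpa [hbdef] using haxA
    · by_cases h3 : j = 3
      · subst h3; simpa [hbdef] using hayA
      · simp only [hbdef, h0, h3, if_false]; exact hc (i + j)
  have hbadj : ∀ j : Fin 6, G.Adj (b j) (b (j + 1)) := by
    intro j
    refine hcomp (i + j) _ (hbmem j) (b (j + 1)) ?_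
    have h : i + (j + 1) = i + j + 1 := (add_assoc i j 1).symm
    rw [← h]; exact hbmem (j + 1)
  have hbnadj : ∀ j k : Fin 6, k ≠ j → k ≠ j + 1 → k ≠ j - 1 → ¬ G.Adj (b j) (b k) := by
    intro j k h1 h2 h3
    refine hanti (i + j) (i + k) ?_ ?_ ?_ _ (hbmem j) _ (hbmem k)
    · exact fun h => h1 (add_left_cancel h)
    · intro h; apply h2
      have he : i + j + 1 = i + (j + 1) := add_assoc i j 1
      rw [he] at h; exact add_left_cancel h
    · intro h; apply h3
      have he : i + j - 1 = i + (j - 1) := add_sub_assoc i j 1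
      rw [he] at h; exact add_left_cancel h
  have hbinj : ∀ j k : Fin 6, j ≠ k → b j ≠ b k := by
    intro j k hjk heq
    have hd := hdisj (show i + j ≠ i + k from fun h => hjk (add_left_cancel h))
    exact Set.disjoint_left.mp hd (hbmem j) (heq ▸ hbmem k)
  have hbU : ∀ j, b j ∈ ⋃ m, A m := fun j => Set.mem_iUnion.mpr ⟨i + j, hbmem j⟩
  have hxb : ∀ j, x ≠ b j := fun j h => hxA (h ▸ hbU j)
  have hyb : ∀ j, y ≠ b j := fun j h => hyA (h ▸ hbU j)
  have hxy : x ≠ y := hadj.ne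
  have hxadj0 : G.Adj x (b 0) := by simpa [hbdef] using haxadj
  have hxnadj : ∀ j : Fin 6, j ≠ 0 → ¬ G.Adj x (b j) := by
    intro j hj
    refine hxanti (i + j) ?_ _ (hbmem j)
    intro h; apply hj
    have he : i + j = i + 0 := by simpa using h
    exact add_left_cancel he
  have hyadj3 : G.Adj y (b 3) := by simpa [hbdef] using hayadj
  have hynadj : ∀ j : Fin 6, j ≠ 3 → ¬ G.Adj y (b j) := by
    intro j hj
    exact hyanti (i + j) (fun h => hj (add_left_cancel h)) _ (hbmem j)
  exact hF1.false (buildF1 G b x y hbadj hbnadj hbinj hxb hyb hxy hxadj0 hxnadj hyadj3 hynadj hadj)
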